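/- The lognormal distribution is Stieltjes-indeterminate: letting μ be the probability measure on ℝ with density f(x) = (1/√(2π)) · (1/x) · exp(−(ln x)²/2) for x > 0 and f(x) = 0 for x ≤ 0, all moments of μ are finite and m_k = ∫ x^k dμ = e^{k²/2} for k = 0, 1, 2, …, and there exists a nonnegative measure ν on ℝ supported on [0,∞) with ν ≠ μ whose moment sequence is also {e^{k²/2}} (hence μ is also Hamburger-indeterminate). -/

import Mathlib

open MeasureTheory Filter Topology

/-- The `(n+1) × (n+1)` shifted Hankel matrix `H_{n,p} = (m_{i+j+p})`. -/
noncomputable def hankel (m : ℕ → ℝ) (n p : ℕ) : Matrix (Fin (n + 1)) (Fin (n + 1)) ℝ :=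
  Matrix.of fun i j => m (i.1 + j.1 + p)

/-- The smallest eigenvalue of a real symmetric matrix, as the infimum of the
quadratic form over unit vectors. -/
noncomputable def smallestEig (N : ℕ) (A : Matrix (Fin N) (Fin N) ℝ) : ℝ :=
  sInf {r : ℝ | ∃ v : Fin N → ℝ, (∑ i, v i ^ 2) = 1 ∧ r = ∑ i, ∑ j, v i * A i j * v j}

/-- All moments of `μ` are finite. -/
def HasMoments (μ : Measure ℝ) : Prop :=
  ∀ k : ℕ, Integrable (fun x : ℝ => x ^ k) μ

/-- The `k`-th moment of `μ`. -/
noncomputable def mom (μ : Measure ℝ) (k : ℕ) : ℝ := ∫ x, x ^ k ∂μ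

/-- `μ` is determinate within the Hamburger moment problem. -/
def HamburgerDeterminate (μ : Measure ℝ) : Prop :=
  ∀ ν : Measure ℝ, HasMoments ν → (∀ k, mom ν k = mom μ k) → ν = μ

/-- `μ` is determinate within the Stieltjes moment problem. -/
def StieltjesDeterminate (μ : Measure ℝ) : Prop :=
  ∀ ν : Measure ℝ, ν (Set.Iio 0) = 0 → HasMoments ν → (∀ k, mom ν k = mom μ k) → ν = μ

/-- The density of the standard lognormal distribution. -/
noncomputable def lognormalPdf (x : ℝ) : ℝ :=
  if 0 < x then (Real.sqrt (2 * Real.pi))⁻¹ * x⁻¹ * Real.exp (-(Real.log x) ^ 2 / 2) else 0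

/-- The standard lognormal distribution on `ℝ`. -/
noncomputable def lognormal : Measure ℝ :=
  MeasureTheory.volume.withDensity fun x => ENNReal.ofReal (lognormalPdf x)

/-! The lognormal distribution is the law of `e^Z` for a standard Gaussian `Z`, so its `k`-th
moment is the moment generating function `E e^{kZ} = e^{k²/2}`. The discrete Gaussian on `ℤ`, with
weights proportional to `e^{-n²/2}`, has the same moment generating function at every integer `k`:
completing the square gives `e^{-n²/2} e^{kn} = e^{k²/2} e^{-(n-k)²/2}`, and a sum over `ℤ` is
invariant under the shift `n ↦ n - k`. Its image under `exp` is therefore a measure on `{e^n}` with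
the lognormal moments, and it differs from the lognormal because it charges the point `1`. -/

open Real ProbabilityTheory

section MapExp

variable (μ : Measure ℝ)

lemma map_exp_Iio_zero : μ.map exp (Set.Iio 0) = 0 := by
  rw [Measure.map_apply measurable_exp measurableSet_Iio]
  simp [Set.preimage, not_lt.2 (exp_pos _).le]

lemma map_exp_singleton_one : μ.map exp {1} = μ {0} := by
  rw [Measure.map_apply measurable_exp (measurableSet_singleton 1)]
  congr 1
  ext t
  simp

lemma hasMoments_map_exp_iff :
    HasMoments (μ.map exp) ↔ ∀ k : ℕ, Integrable (fun t => exp (k * t)) μ := by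
  refine forall_congr' fun k => ?_
  rw [integrable_map_measure (by fun_prop) measurable_exp.aemeasurable]
  simp only [Function.comp_def, exp_nat_mul]

lemma mom_map_exp (k : ℕ) : mom (μ.map exp) k = mgf id μ k := by
  rw [mom, integral_map measurable_exp.aemeasurable (by fun_prop)]
  simp only [mgf, id, exp_nat_mul]

end MapExp

lemma exp_mul_lognormalPdf_exp (t : ℝ) :
    exp t * lognormalPdf (exp t) = gaussianPDFReal 0 1 t := by
  rw [lognormalPdf, if_pos (exp_pos t), log_exp, gaussianPDFReal]
  field_simp
  simp [mul_comm]

lemma support_lognormalPdf_subset : Function.support lognormalPdf ⊆ Set.Ioi 0 := by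
  intro x hx
  by_contra h
  exact hx (if_neg h)

lemma lognormal_eq_map_exp : lognormal = (gaussianReal 0 1).map exp := by
  ext s hs
  let g x := ENNReal.ofReal (lognormalPdf x)
  have hg : Function.support g ⊆ Set.Ioi 0 := fun x hx =>
    support_lognormalPdf_subset fun h => hx (by simp [g, h])
  calc lognormal s = ∫⁻ x in s ∩ Set.Ioi 0, g x := by
        rw [lognormal, withDensity_apply _ hs, ← setLIntegral_eq_of_support_subset hg,
          Measure.restrict_restrict measurableSet_Ioi, Set.inter_comm]
    _ = ∫⁻ t in exp ⁻¹' s, ENNReal.ofReal |exp t| * g (exp t) := by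
        rw [← range_exp, ← Set.image_preimage_eq_inter_range,
          lintegral_image_eq_lintegral_abs_deriv_mul (measurable_exp hs)
            (fun t _ => (hasDerivAt_exp t).hasDerivWithinAt) exp_injective.injOn]
    _ = (gaussianReal 0 1).map exp s := by
        rw [Measure.map_apply measurable_exp hs, gaussianReal_apply 0 one_ne_zero]
        refine lintegral_congr fun t => ?_
        rw [abs_of_pos (exp_pos t), ← ENNReal.ofReal_mul (exp_pos t).le,
          exp_mul_lognormalPdf_exp]
        rfl

lemma exp_neg_sq_div_two_mul_exp_mul (k x : ℝ) :
    exp (-x ^ 2 / 2) * exp (k * x) = exp (k ^ 2 / 2) * exp (-(x - k) ^ 2 / 2) := by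
  rw [← exp_add, ← exp_add]
  ring_nf

lemma summable_exp_neg_intCast_sq_div_two : Summable fun n : ℤ => exp (-(n : ℝ) ^ 2 / 2) := by
  convert summable_pow_mul_jacobiTheta₂_term_bound 0 (T := (2 * π)⁻¹) (by positivity) 0
    using 2 with n
  simp only [pow_zero, one_mul, mul_zero, zero_mul, sub_zero]
  field_simp

noncomputable def intGaussianSum : ℝ := ∑' n : ℤ, exp (-(n : ℝ) ^ 2 / 2)

lemma intGaussianSum_pos : 0 < intGaussianSum :=
  summable_exp_neg_intCast_sq_div_two.tsum_pos (fun _ => (exp_pos _).le) 0 (exp_pos _)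

lemma hasSum_exp_neg_intCast_sq_div_two_mul_exp (k : ℤ) :
    HasSum (fun n : ℤ => exp (-(n : ℝ) ^ 2 / 2) * exp (k * n))
      (exp ((k : ℝ) ^ 2 / 2) * intGaussianSum) := by
  have hshift : HasSum (fun n : ℤ => exp (-((n : ℝ) - k) ^ 2 / 2)) intGaussianSum := by
    have := (Equiv.subRight k).hasSum_iff.mpr summable_exp_neg_intCast_sq_div_two.hasSum
    rw [intGaussianSum]
    simpa [Function.comp_def] using this
  simpa only [exp_neg_sq_div_two_mul_exp_mul] using hshift.mul_left (exp ((k : ℝ) ^ 2 / 2))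

noncomputable def discreteGaussianWeight (n : ℤ) : ℝ := exp (-(n : ℝ) ^ 2 / 2) / intGaussianSum

lemma discreteGaussianWeight_pos (n : ℤ) : 0 < discreteGaussianWeight n :=
  div_pos (exp_pos _) intGaussianSum_pos

noncomputable def discreteGaussian : Measure ℝ :=
  Measure.sum fun n : ℤ => ENNReal.ofReal (discreteGaussianWeight n) • Measure.dirac (n : ℝ)

lemma hasSum_discreteGaussianWeight_mul_exp (k : ℤ) :
    HasSum (fun n : ℤ => (ENNReal.ofReal (discreteGaussianWeight n)).toReal * ‖exp (k * n)‖)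
      (exp ((k : ℝ) ^ 2 / 2)) := by
  have := (hasSum_exp_neg_intCast_sq_div_two_mul_exp k).div_const intGaussianSum
  rw [mul_div_cancel_right₀ _ intGaussianSum_pos.ne'] at this
  have hterm (n : ℤ) : (ENNReal.ofReal (discreteGaussianWeight n)).toReal * ‖exp (k * n)‖ =
      exp (-(n : ℝ) ^ 2 / 2) * exp (k * n) / intGaussianSum := by
    rw [ENNReal.toReal_ofReal (discreteGaussianWeight_pos n).le, norm_of_nonneg (exp_pos _).le,
      discreteGaussianWeight, div_mul_eq_mul_div]
  simpa only [hterm] using this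

lemma integrable_exp_intCast_mul_discreteGaussian (k : ℤ) :
    Integrable (fun t => exp (k * t)) discreteGaussian :=
  integrable_sum_dirac (fun _ => ENNReal.ofReal_ne_top)
    (hasSum_discreteGaussianWeight_mul_exp k).summable

lemma mgf_discreteGaussian_intCast (k : ℤ) : mgf id discreteGaussian k = exp ((k : ℝ) ^ 2 / 2) := by
  simp only [mgf, id]
  rw [discreteGaussian, integral_sum_dirac_eq_tsum (f := fun t => exp (k * t))
    (fun _ => ENNReal.ofReal_ne_top)
    (hasSum_discreteGaussianWeight_mul_exp k).summable]
  simpa only [norm_of_nonneg (exp_pos _).le, smul_eq_mul] using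
    (hasSum_discreteGaussianWeight_mul_exp k).tsum_eq

lemma discreteGaussian_singleton_zero_ne_zero : discreteGaussian {0} ≠ 0 := by
  refine ne_of_gt (lt_of_lt_of_le ?_ (Measure.le_sum _ 0 {0}))
  simp [discreteGaussianWeight_pos]

theorem stmt_16 :
    IsProbabilityMeasure lognormal ∧
    lognormal (Set.Iio 0) = 0 ∧
    HasMoments lognormal ∧
    (∀ k : ℕ, mom lognormal k = Real.exp ((k : ℝ) ^ 2 / 2)) ∧
    ∃ ν : Measure ℝ, ν (Set.Iio 0) = 0 ∧ HasMoments ν ∧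
      (∀ k : ℕ, mom ν k = Real.exp ((k : ℝ) ^ 2 / 2)) ∧ ν ≠ lognormal := by
  have mgf_gaussian (k : ℕ) : mgf id (gaussianReal 0 1) k = exp ((k : ℝ) ^ 2 / 2) := by
    simp [mgf_id_gaussianReal]
  have : NullSingletonClass (gaussianReal 0 1) := nullSingletonClass_gaussianReal one_ne_zero
  rw [lognormal_eq_map_exp]
  refine ⟨Measure.isProbabilityMeasure_map measurable_exp.aemeasurable, map_exp_Iio_zero _,
    (hasMoments_map_exp_iff _).2 fun k => integrable_exp_mul_gaussianReal _,
    fun k => (mom_map_exp _ k).trans (mgf_gaussian k),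
    discreteGaussian.map exp, map_exp_Iio_zero _,
    (hasMoments_map_exp_iff _).2 fun k => mod_cast integrable_exp_intCast_mul_discreteGaussian k,
    fun k => (mom_map_exp _ k).trans (by simpa using mgf_discreteGaussian_intCast k), fun h => ?_⟩
  apply discreteGaussian_singleton_zero_ne_zero
  rw [← map_exp_singleton_one, h, map_exp_singleton_one, measure_singleton]
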